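/- If n is odd, then σ is a single cycle of length 2n on {1, 2, …, 2n}; equivalently, the orbit of 1 under σ, namely {1, σ(1), σ²(1), …, σ^{2n−1}(1)}, is all of {1, 2, …, 2n}. -/

import Mathlib

/-- The permutation `σ = τ ∘ T²` of the coordinates (written `0`-based on `Fin (2n)`,
whereas the paper uses the index set `{1,…,2n}`): a `0`-based index `j` with `j` even
(paper index `j+1` odd) is sent to `j + 3 (mod 2n)`, and `j` odd is sent to
`j + 1 (mod 2n)`. -/
def sigmaFn (n : ℕ) [NeZero n] (j : Fin (2 * n)) : Fin (2 * n) :=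
  if j.val % 2 = 0 then j + 3 else j + 1

/-!
On even indices `σ² j = j + 4 (mod 2n)`, so the even-step orbit of an even index `j` consists
of the residues `j + 4k mod 2n`; these exhaust the even residues exactly when `2` is invertible
modulo `n`, i.e. when `n` is odd. Every odd index `m` is then reached one step later, as
`σ (m - 3)`.
-/

namespace Nat

theorem exists_lt_two_mul_modEq_of_odd {n : ℕ} (hn : Odd n) (t : ℕ) :
    ∃ k < n, 2 * k ≡ t [MOD n] := by
  obtain ⟨s, rfl⟩ := hn
  -- `s + 1` is the inverse of `2` modulo `2 s + 1`.
  refine ⟨t * (s + 1) % (2 * s + 1), Nat.mod_lt _ (by omega), ?_⟩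
  calc 2 * (t * (s + 1) % (2 * s + 1)) ≡ 2 * (t * (s + 1)) [MOD 2 * s + 1] :=
        (Nat.mod_modEq _ _).mul_left 2
    _ = t + t * (2 * s + 1) := by ring
    _ ≡ t [MOD 2 * s + 1] := (Nat.modEq_add_mul_modulus_iff.mpr rfl).symm

theorem exists_lt_four_mul_modEq_of_odd {n a : ℕ} (hn : Odd n) (ha : Even a) :
    ∃ k < n, 4 * k ≡ a [MOD 2 * n] := by
  obtain ⟨t, rfl⟩ := ha
  obtain ⟨k, hk, hkt⟩ := exists_lt_two_mul_modEq_of_odd hn t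
  refine ⟨k, hk, ?_⟩
  convert hkt.mul_left' 2 using 1 <;> ring

end Nat

section sigmaFn

variable {n : ℕ} [NeZero n]

theorem sigmaFn_val_of_even {j : Fin (2 * n)} (hj : j.val % 2 = 0) :
    (sigmaFn n j).val = (j.val + 3) % (2 * n) := by
  simp only [sigmaFn, hj, if_true, Fin.val_add, Fin.coe_ofNat_eq_mod, Nat.add_mod_mod]

theorem sigmaFn_val_of_odd {j : Fin (2 * n)} (hj : j.val % 2 = 1) :
    (sigmaFn n j).val = (j.val + 1) % (2 * n) := by
  simp only [sigmaFn, hj, one_ne_zero, if_false, Fin.val_add, Fin.coe_ofNat_eq_mod,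
    Nat.add_mod_mod]

theorem sigmaFn_sigmaFn_val_of_even {j : Fin (2 * n)} (hj : j.val % 2 = 0) :
    (sigmaFn n (sigmaFn n j)).val = (j.val + 4) % (2 * n) := by
  have h_odd : (sigmaFn n j).val % 2 = 1 := by
    rw [sigmaFn_val_of_even hj, Nat.mod_mul_right_mod]
    omega
  rw [sigmaFn_val_of_odd h_odd, sigmaFn_val_of_even hj, Nat.mod_add_mod, add_assoc]

theorem sigmaFn_iterate_two_mul_val_of_even (k : ℕ) {j : Fin (2 * n)} (hj : j.val % 2 = 0) :
    ((sigmaFn n)^[2 * k] j).val = (j.val + 4 * k) % (2 * n) := by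
  induction k with
  | zero => simp [Nat.mod_eq_of_lt j.isLt]
  | succ k ih =>
    have h_even : ((sigmaFn n)^[2 * k] j).val % 2 = 0 := by
      rw [ih, Nat.mod_mul_right_mod]
      omega
    rw [show 2 * (k + 1) = 2 * k + 1 + 1 by ring, Function.iterate_succ_apply',
      Function.iterate_succ_apply', sigmaFn_sigmaFn_val_of_even h_even, ih, Nat.mod_add_mod]
    ring_nf

theorem sigmaFn_iterate_two_mul_add_one_val_of_even (k : ℕ) {j : Fin (2 * n)}
    (hj : j.val % 2 = 0) :
    ((sigmaFn n)^[2 * k + 1] j).val = (j.val + 4 * k + 3) % (2 * n) := by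
  have h_even : ((sigmaFn n)^[2 * k] j).val % 2 = 0 := by
    rw [sigmaFn_iterate_two_mul_val_of_even k hj, Nat.mod_mul_right_mod]
    omega
  rw [Function.iterate_succ_apply', sigmaFn_val_of_even h_even,
    sigmaFn_iterate_two_mul_val_of_even k hj, Nat.mod_add_mod]

theorem exists_lt_iterate_sigmaFn_eq_of_odd (hn : Odd n) {j : Fin (2 * n)} (hj : j.val % 2 = 0)
    (m : Fin (2 * n)) : ∃ k < 2 * n, (sigmaFn n)^[k] j = m := by
  have hj_lt := j.isLt
  rcases Nat.even_or_odd m.val with hm | hm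
  · have hm := Nat.even_iff.mp hm
    obtain ⟨k, hk, hka⟩ := Nat.exists_lt_four_mul_modEq_of_odd hn (a := m.val + (2 * n - j.val))
      (Nat.even_iff.mpr (by omega))
    refine ⟨2 * k, by omega, Fin.ext ?_⟩
    rw [sigmaFn_iterate_two_mul_val_of_even k hj]
    refine Nat.mod_eq_of_modEq ?_ m.isLt
    calc j.val + 4 * k ≡ j.val + (m.val + (2 * n - j.val)) [MOD 2 * n] := hka.add_left _
      _ = m.val + 2 * n := by omega
      _ ≡ m.val [MOD 2 * n] := Nat.add_modulus_modEq_iff.mpr rfl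
  · have hm := Nat.odd_iff.mp hm
    obtain ⟨k, hk, hka⟩ := Nat.exists_lt_four_mul_modEq_of_odd hn
      (a := m.val + (2 * n - j.val) - 3) (Nat.even_iff.mpr (by omega))
    refine ⟨2 * k + 1, by omega, Fin.ext ?_⟩
    rw [sigmaFn_iterate_two_mul_add_one_val_of_even k hj]
    refine Nat.mod_eq_of_modEq ?_ m.isLt
    calc j.val + 4 * k + 3 ≡ j.val + (m.val + (2 * n - j.val) - 3) + 3 [MOD 2 * n] :=
          (hka.add_left _).add_right _
      _ = m.val + 2 * n := by omega
      _ ≡ m.val [MOD 2 * n] := Nat.add_modulus_modEq_iff.mpr rfl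

end sigmaFn

/-- If `n` is odd, then `σ` is a single cycle of length `2n` on the
`2n` coordinates: the orbit `{1, σ(1), σ²(1), …, σ^{2n−1}(1)}` of the first
coordinate (index `0` here, index `1` in the paper) is the whole index set. -/
theorem sigmaFn_single_cycle_of_odd (n : ℕ) [NeZero n] (hodd : Odd n) :
    ∀ m : Fin (2 * n), ∃ k, k < 2 * n ∧
      (sigmaFn n)^[k] ⟨0, by have := Nat.pos_of_neZero n; omega⟩ = m :=
  exists_lt_iterate_sigmaFn_eq_of_odd hodd rfl
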